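/- arXiv:2210.03776 — 2 statements merged into one kernel-verified Lean document; each statement's English description precedes it below -/
import Mathlib

section
/- Let X and Y be Polish spaces and c : X × Y → ℝ a continuous non-negative cost function. Let K be an optimal transport kernel for c, and let μ₁, μ₂ be probability measures on X such that γ₁ := μ₁ ⊙ K and γ₂ := μ₂ ⊙ K each have finite transport cost. Then γ₁ and γ₂ are c-CM compatible, i.e. supp(γ₁) ∪ supp(γ₂) is c-cyclically monotone. -/
/-!
The mixture `μ = (μ₁ + μ₂) / 2` has `μ ⊗ K = (γ₁ + γ₂) / 2`, of finite cost, so it is an optimal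
plan, and its support contains `supp γ₁ ∪ supp γ₂`. It remains to see that an optimal plan `γ` of
finite cost has `c`-cyclically monotone support. If points `p i` of `supp γ` violated the inequality
for `σ`, continuity of `c` would give product neighbourhoods `A i = U i ×ˢ V i` of `p i` of positive
mass on which the violation persists. Replacing the piece `r • ∑ γ[|A i]` of `γ` (with `r` small) by
`r • ∑ (γ[|A i]).fst ⊗ (γ[|A (σ i)]).snd` keeps both marginals and strictly lowers the cost.
-/

open MeasureTheory ProbabilityTheory Set
open scoped ENNReal

noncomputable section

/-- The transport cost of a plan `γ` for the cost function `c`. -/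
def transportCost {X Y : Type*} [MeasurableSpace X] [MeasurableSpace Y]
    (c : X × Y → ℝ) (γ : Measure (X × Y)) : ℝ≥0∞ :=
  ∫⁻ p, ENNReal.ofReal (c p) ∂γ

/-- `γ` is a coupling of `μ` and `ν`: its marginals are `μ` and `ν`. -/
def IsCoupling {X Y : Type*} [MeasurableSpace X] [MeasurableSpace Y]
    (γ : Measure (X × Y)) (μ : Measure X) (ν : Measure Y) : Prop :=
  γ.map Prod.fst = μ ∧ γ.map Prod.snd = ν

/-- `γ` is an optimal coupling of `μ` and `ν` for the cost `c`: it is a coupling and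
attains the infimum of the transport cost over all couplings of `μ` and `ν`. -/
def IsOptimalCoupling {X Y : Type*} [MeasurableSpace X] [MeasurableSpace Y]
    (c : X × Y → ℝ) (γ : Measure (X × Y)) (μ : Measure X) (ν : Measure Y) : Prop :=
  IsCoupling γ μ ν ∧
    ∀ γ' : Measure (X × Y), IsCoupling γ' μ ν → transportCost c γ ≤ transportCost c γ'


/-- A set `Γ ⊆ X × Y` is `c`-cyclically monotone: for any finite family of points of `Γ`
and any permutation `σ`, `∑ c(xᵢ,yᵢ) ≤ ∑ c(xᵢ, y_{σ(i)})`. -/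
def IsCCM {X Y : Type*} (c : X × Y → ℝ) (Γ : Set (X × Y)) : Prop :=
  ∀ (N : ℕ) (σ : Equiv.Perm (Fin N)) (p : Fin N → X × Y),
    (∀ i, p i ∈ Γ) → ∑ i, c (p i) ≤ ∑ i, c ((p i).1, (p (σ i)).2)

/-- The (topological) support of a measure: the set of points all of whose open
neighbourhoods have positive measure. -/
def mSupport {Z : Type*} [TopologicalSpace Z] [MeasurableSpace Z] (γ : Measure Z) :
    Set Z :=
  {z | ∀ U : Set Z, IsOpen U → z ∈ U → γ U ≠ 0}

/-- A Markov kernel `K` is an optimal transport kernel for the cost `c` if, for every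
probability measure `μ`, whenever the product measure `μ ⊙ K = μ ⊗ₘ K` has finite
transport cost it is an optimal coupling between `μ` and `μK`. -/
def IsOptimalTransportKernel {X Y : Type*} [MeasurableSpace X] [MeasurableSpace Y]
    (c : X × Y → ℝ) (K : Kernel X Y) : Prop :=
  ∀ μ : Measure X, IsProbabilityMeasure μ → transportCost c (μ ⊗ₘ K) < ⊤ →
    IsOptimalCoupling c (μ ⊗ₘ K) μ (μ.bind K)

namespace ENNReal

theorem ofReal_sum_le {ι : Type*} (s : Finset ι) (f : ι → ℝ) :
    ENNReal.ofReal (∑ i ∈ s, f i) ≤ ∑ i ∈ s, ENNReal.ofReal (f i) := by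
  classical
  induction s using Finset.induction_on with
  | empty => simp
  | insert i s hi ih =>
    rw [Finset.sum_insert hi, Finset.sum_insert hi]
    exact ENNReal.ofReal_add_le.trans (add_le_add_right ih _)

end ENNReal

theorem exists_pos_add_mul_lt_sub_mul {S T : ℝ} (h : T < S) {n : ℝ} (hn : 0 ≤ n) :
    ∃ δ > 0, T + n * δ < S - n * δ := by
  have hδ : 0 < (S - T) / (2 * n + 1) := div_pos (sub_pos.2 h) (by positivity)
  refine ⟨_, hδ, ?_⟩
  have : (2 * n + 1) * ((S - T) / (2 * n + 1)) = S - T := mul_div_cancel₀ _ (by positivity)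
  nlinarith

theorem Continuous.exists_isOpen_forall_dist_lt {X Y Z ι : Type*} [TopologicalSpace X]
    [TopologicalSpace Y] [PseudoMetricSpace Z] [Finite ι] {f : X × Y → Z} (hf : Continuous f)
    (x : ι → X) (y : ι → Y) {δ : ℝ} (hδ : 0 < δ) :
    ∃ (U : ι → Set X) (V : ι → Set Y), (∀ i, IsOpen (U i) ∧ x i ∈ U i) ∧
      (∀ j, IsOpen (V j) ∧ y j ∈ V j) ∧
      ∀ i j, ∀ x' ∈ U i, ∀ y' ∈ V j, dist (f (x', y')) (f (x i, y j)) < δ := by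
  have key (i j : ι) : ∃ U V, IsOpen U ∧ IsOpen V ∧ x i ∈ U ∧ y j ∈ V ∧
      U ×ˢ V ⊆ f ⁻¹' Metric.ball (f (x i, y j)) δ :=
    isOpen_prod_iff.mp (Metric.isOpen_ball.preimage hf) _ _ (Metric.mem_ball_self hδ)
  choose U V hU hV hxU hyV hUV using key
  exact ⟨fun i => ⋂ j, U i j, fun j => ⋂ i, V i j,
    fun i => ⟨isOpen_iInter_of_finite (hU i), mem_iInter.2 (hxU i)⟩,
    fun j => ⟨isOpen_iInter_of_finite fun i => hV i j, mem_iInter.2 fun i => hyV i j⟩,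
    fun i j _ hx' _ hy' => hUV i j ⟨mem_iInter.1 hx' j, mem_iInter.1 hy' i⟩⟩

theorem MeasureTheory.Measure.AbsolutelyContinuous.mSupport_subset {Z : Type*}
    [TopologicalSpace Z] [MeasurableSpace Z] {μ ν : Measure Z} (h : μ ≪ ν) :
    mSupport μ ⊆ mSupport ν :=
  fun _ hz U hU hzU hνU => hz U hU hzU (h hνU)

theorem IsCCM.mono {X Y : Type*} {c : X × Y → ℝ} {Γ Γ' : Set (X × Y)} (h : IsCCM c Γ')
    (hΓ : Γ ⊆ Γ') : IsCCM c Γ :=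
  fun N σ p hp => h N σ p fun i => hΓ (hp i)

namespace MeasureTheory.Measure

variable {X Y ι : Type*} [MeasurableSpace X] [MeasurableSpace Y]

theorem fst_finsetSum (s : Finset ι) (ρ : ι → Measure (X × Y)) :
    (∑ i ∈ s, ρ i).fst = ∑ i ∈ s, (ρ i).fst :=
  map_finset_sum measurable_fst.aemeasurable

theorem snd_finsetSum (s : Finset ι) (ρ : ι → Measure (X × Y)) :
    (∑ i ∈ s, ρ i).snd = ∑ i ∈ s, (ρ i).snd :=
  map_finset_sum measurable_snd.aemeasurable

theorem fst_smul (r : ℝ≥0∞) (ρ : Measure (X × Y)) : (r • ρ).fst = r • ρ.fst :=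
  Measure.map_smul _ _ _

theorem snd_smul (r : ℝ≥0∞) (ρ : Measure (X × Y)) : (r • ρ).snd = r • ρ.snd :=
  Measure.map_smul _ _ _

theorem ae_mem_fst_of_ae_mem_prod {ρ : Measure (X × Y)} {U : Set X} {V : Set Y}
    (hU : MeasurableSet U) (h : ∀ᵐ z ∂ρ, z ∈ U ×ˢ V) : ∀ᵐ x ∂ρ.fst, x ∈ U :=
  (ae_map_iff measurable_fst.aemeasurable hU).2 (h.mono fun _ hz => hz.1)

theorem ae_mem_snd_of_ae_mem_prod {ρ : Measure (X × Y)} {U : Set X} {V : Set Y}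
    (hV : MeasurableSet V) (h : ∀ᵐ z ∂ρ, z ∈ U ×ˢ V) : ∀ᵐ y ∂ρ.snd, y ∈ V :=
  (ae_map_iff measurable_snd.aemeasurable hV).2 (h.mono fun _ hz => hz.2)

theorem ae_mem_prod_of_ae {μ : Measure X} {ν : Measure Y} [SFinite ν] {U : Set X}
    {V : Set Y} (hU : ∀ᵐ x ∂μ, x ∈ U) (hV : ∀ᵐ y ∂ν, y ∈ V) : ∀ᵐ z ∂μ.prod ν, z ∈ U ×ˢ V :=
  (quasiMeasurePreserving_fst.ae hU).and (quasiMeasurePreserving_snd.ae hV)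

variable [Fintype ι] (ρ : ι → Measure (X × Y)) [∀ i, IsProbabilityMeasure (ρ i)]
  (σ : Equiv.Perm ι)

theorem fst_sum_prod_perm : (∑ i, (ρ i).fst.prod (ρ (σ i)).snd).fst = (∑ i, ρ i).fst := by
  simp only [fst_finsetSum, fst_prod]

theorem snd_sum_prod_perm : (∑ i, (ρ i).fst.prod (ρ (σ i)).snd).snd = (∑ i, ρ i).snd := by
  simp only [snd_finsetSum, snd_prod]
  exact Equiv.sum_comp σ fun i => (ρ i).snd

end MeasureTheory.Measure

theorem smul_sum_cond_le {α ι : Type*} [MeasurableSpace α] [Fintype ι] {γ : Measure α}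
    {A : ι → Set α} {r : ℝ≥0∞} (hr : ∀ i, r * Fintype.card ι ≤ γ (A i)) : r • ∑ i, γ[|A i] ≤ γ := by
  have hterm (i : ι) : r • γ[|A i] ≤ (Fintype.card ι : ℝ≥0∞)⁻¹ • γ := by
    have hcoef : r * (γ (A i))⁻¹ ≤ (Fintype.card ι : ℝ≥0∞)⁻¹ := by
      rw [ENNReal.le_inv_iff_mul_le, mul_right_comm]
      exact (mul_le_mul_left (hr i) _).trans (ENNReal.mul_inv_le_one _)
    calc r • γ[|A i] = (r * (γ (A i))⁻¹) • γ.restrict (A i) := by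
          rw [ProbabilityTheory.cond, smul_smul]
      _ ≤ (Fintype.card ι : ℝ≥0∞)⁻¹ • γ :=
          IsOrderedSMul.smul_le_smul hcoef Measure.restrict_le_self
  calc r • ∑ i, γ[|A i] = ∑ i, r • γ[|A i] := Finset.smul_sum
    _ ≤ ∑ _i : ι, (Fintype.card ι : ℝ≥0∞)⁻¹ • γ := Finset.sum_le_sum fun i _ => hterm i
    _ = ((Fintype.card ι : ℝ≥0∞) * (Fintype.card ι : ℝ≥0∞)⁻¹) • γ := by
          rw [Finset.sum_const, Finset.card_univ, mul_smul, Nat.cast_smul_eq_nsmul]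
    _ ≤ γ := by
          simpa using IsOrderedSMul.smul_le_smul (ENNReal.mul_inv_le_one _) (le_refl γ)

section TransportCost

variable {X Y : Type*} [MeasurableSpace X] [MeasurableSpace Y] {c : X × Y → ℝ}

theorem transportCost_add (γ₁ γ₂ : Measure (X × Y)) :
    transportCost c (γ₁ + γ₂) = transportCost c γ₁ + transportCost c γ₂ :=
  lintegral_add_measure _ _ _

theorem transportCost_smul (r : ℝ≥0∞) (γ : Measure (X × Y)) :
    transportCost c (r • γ) = r * transportCost c γ :=
  lintegral_smul_measure _ _

theorem transportCost_finsetSum {ι : Type*} (s : Finset ι) (γ : ι → Measure (X × Y)) :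
    transportCost c (∑ i ∈ s, γ i) = ∑ i ∈ s, transportCost c (γ i) :=
  lintegral_finsetSum_measure _ _ _

variable {ι : Type*} [Fintype ι] {ρ : ι → Measure (X × Y)} [∀ i, IsProbabilityMeasure (ρ i)]

theorem ofReal_sum_le_transportCost_sum {a : ι → ℝ} (ha : ∀ i, ∀ᵐ z ∂ρ i, a i ≤ c z) :
    ENNReal.ofReal (∑ i, a i) ≤ transportCost c (∑ i, ρ i) := by
  rw [transportCost_finsetSum]
  refine (ENNReal.ofReal_sum_le _ _).trans (Finset.sum_le_sum fun i _ => ?_)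
  calc ENNReal.ofReal (a i) = ∫⁻ _, ENNReal.ofReal (a i) ∂ρ i := by simp
    _ ≤ transportCost c (ρ i) :=
        lintegral_mono_ae ((ha i).mono fun _ hz => ENNReal.ofReal_le_ofReal hz)

theorem transportCost_sum_le_ofReal_sum {b : ι → ℝ} (hb₀ : ∀ i, 0 ≤ b i)
    (hb : ∀ i, ∀ᵐ z ∂ρ i, c z ≤ b i) :
    transportCost c (∑ i, ρ i) ≤ ENNReal.ofReal (∑ i, b i) := by
  rw [transportCost_finsetSum, ENNReal.ofReal_sum_of_nonneg fun i _ => hb₀ i]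
  refine Finset.sum_le_sum fun i _ => ?_
  calc transportCost c (ρ i) ≤ ∫⁻ _, ENNReal.ofReal (b i) ∂ρ i :=
        lintegral_mono_ae ((hb i).mono fun _ hz => ENNReal.ofReal_le_ofReal hz)
    _ = ENNReal.ofReal (b i) := by simp

theorem IsOptimalCoupling.transportCost_le_of_le {γ η ζ : Measure (X × Y)} {μ : Measure X}
    {ν : Measure Y} (hopt : IsOptimalCoupling c γ μ ν) (hfin : transportCost c γ ≠ ⊤)
    [IsFiniteMeasure γ] (hηγ : η ≤ γ) (hfst : ζ.fst = η.fst) (hsnd : ζ.snd = η.snd) :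
    transportCost c η ≤ transportCost c ζ := by
  have := isFiniteMeasure_of_le γ hηγ
  have hsplit : γ - η + η = γ := Measure.sub_add_cancel_of_le hηγ
  have hcoupling : IsCoupling (γ - η + ζ) μ ν := by
    refine ⟨?_, ?_⟩
    · change (γ - η + ζ).fst = μ
      rw [Measure.fst_add, hfst, ← Measure.fst_add, hsplit]
      exact hopt.1.1
    · change (γ - η + ζ).snd = ν
      rw [Measure.snd_add, hsnd, ← Measure.snd_add, hsplit]
      exact hopt.1.2
  have hcost : transportCost c γ = transportCost c (γ - η) + transportCost c η := by
    rw [← transportCost_add, hsplit]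
  have hle := hopt.2 _ hcoupling
  rw [hcost, transportCost_add] at hle
  exact (ENNReal.add_le_add_iff_left
    (ne_top_of_le_ne_top hfin (hcost ▸ le_self_add))).1 hle

end TransportCost

theorem IsOptimalCoupling.transportCost_sum_cond_le {X Y ι : Type*} [MeasurableSpace X]
    [MeasurableSpace Y] [Fintype ι] {c : X × Y → ℝ} {γ : Measure (X × Y)} [IsFiniteMeasure γ]
    {μ : Measure X} {ν : Measure Y} (hopt : IsOptimalCoupling c γ μ ν)
    (hfin : transportCost c γ ≠ ⊤) {A : ι → Set (X × Y)} (hA₀ : ∀ i, γ (A i) ≠ 0)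
    (σ : Equiv.Perm ι) :
    transportCost c (∑ i, γ[|A i]) ≤
      transportCost c (∑ i, (γ[|A i]).fst.prod (γ[|A (σ i)]).snd) := by
  cases isEmpty_or_nonempty ι
  · simp
  have (i : ι) : IsProbabilityMeasure γ[|A i] := cond_isProbabilityMeasure (hA₀ i)
  obtain ⟨i₀, hi₀⟩ := Finite.exists_min fun i => γ (A i)
  have hcard : (Fintype.card ι : ℝ≥0∞) ≠ 0 := by simp
  set r := γ (A i₀) / Fintype.card ι
  have hr₀ : r ≠ 0 := by simp [r, hA₀ i₀]
  have hr : r ≠ ⊤ := ENNReal.div_ne_top (measure_ne_top _ _) hcard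
  have hle : r • ∑ i, γ[|A i] ≤ γ := smul_sum_cond_le fun i => by
    simpa [r, ENNReal.div_mul_cancel hcard (ENNReal.natCast_ne_top _)] using hi₀ i
  have hcost := hopt.transportCost_le_of_le
    (ζ := r • ∑ i, (γ[|A i]).fst.prod (γ[|A (σ i)]).snd) hfin hle
    (by rw [Measure.fst_smul, Measure.fst_smul, Measure.fst_sum_prod_perm])
    (by rw [Measure.snd_smul, Measure.snd_smul, Measure.snd_sum_prod_perm])
  rwa [transportCost_smul, transportCost_smul, ENNReal.mul_le_mul_iff_right hr₀ hr] at hcost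

theorem IsOptimalCoupling.isCCM_mSupport {X Y : Type*} [MeasurableSpace X]
    [TopologicalSpace X] [OpensMeasurableSpace X] [MeasurableSpace Y] [TopologicalSpace Y]
    [OpensMeasurableSpace Y] {c : X × Y → ℝ} (hc : Continuous c) (hc₀ : ∀ p, 0 ≤ c p)
    {γ : Measure (X × Y)} [IsFiniteMeasure γ] {μ : Measure X} {ν : Measure Y}
    (hopt : IsOptimalCoupling c γ μ ν) (hfin : transportCost c γ ≠ ⊤) :
    IsCCM c (mSupport γ) := by
  intro N σ p hp
  by_contra! hlt
  set S := ∑ i, c (p i)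
  set T := ∑ i, c ((p i).1, (p (σ i)).2)
  obtain ⟨δ, hδ, hgap⟩ := exists_pos_add_mul_lt_sub_mul hlt N.cast_nonneg
  obtain ⟨U, V, hU, hV, hUV⟩ :=
    hc.exists_isOpen_forall_dist_lt (fun i => (p i).1) (fun i => (p i).2) hδ
  set A : Fin N → Set (X × Y) := fun i => U i ×ˢ V i
  have hA (i : Fin N) : ∀ᵐ z ∂γ[|A i], z ∈ U i ×ˢ V i :=
    ae_cond_mem ((hU i).1.measurableSet.prod (hV i).1.measurableSet)
  have hA₀ (i : Fin N) : γ (A i) ≠ 0 := hp i _ ((hU i).1.prod (hV i).1) ⟨(hU i).2, (hV i).2⟩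
  have (i : Fin N) : IsProbabilityMeasure γ[|A i] := cond_isProbabilityMeasure (hA₀ i)
  have hη : ENNReal.ofReal (S - N * δ) ≤ transportCost c (∑ i, γ[|A i]) := by
    have := ofReal_sum_le_transportCost_sum (c := c) (a := fun i => c (p i) - δ) fun i =>
      (hA i).mono fun z hz => by
        have := hUV i i z.1 hz.1 z.2 hz.2
        rw [Real.dist_eq, abs_lt] at this
        linarith
    simpa [Finset.sum_sub_distrib] using this
  have hζ : transportCost c (∑ i, (γ[|A i]).fst.prod (γ[|A (σ i)]).snd) ≤
      ENNReal.ofReal (T + N * δ) := by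
    have := transportCost_sum_le_ofReal_sum (c := c)
      (b := fun i => c ((p i).1, (p (σ i)).2) + δ)
      (fun i => by linarith [hc₀ ((p i).1, (p (σ i)).2)]) fun i =>
      (Measure.ae_mem_prod_of_ae (Measure.ae_mem_fst_of_ae_mem_prod (hU i).1.measurableSet (hA i))
        (Measure.ae_mem_snd_of_ae_mem_prod (hV _).1.measurableSet (hA (σ i)))).mono
        fun z hz => by
          have := hUV i (σ i) z.1 hz.1 z.2 hz.2
          rw [Real.dist_eq, abs_lt] at this
          linarith
    simpa [Finset.sum_add_distrib] using this
  have hT₀ : 0 ≤ T + N * δ := add_nonneg (Finset.sum_nonneg fun i _ => hc₀ _) (by positivity)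
  exact ((ENNReal.ofReal_lt_ofReal_iff_of_nonneg hT₀).2 hgap).not_ge
    (hη.trans ((hopt.transportCost_sum_cond_le hfin hA₀ σ).trans hζ))

theorem stmt5_general {X Y : Type*}
    [MeasurableSpace X] [TopologicalSpace X] [BorelSpace X]
    [MeasurableSpace Y] [TopologicalSpace Y] [BorelSpace Y]
    (c : X × Y → ℝ) (hc_cont : Continuous c) (hc_nonneg : ∀ p, 0 ≤ c p)
    (K : Kernel X Y) [IsMarkovKernel K] (hK : IsOptimalTransportKernel c K)
    (μ₁ μ₂ : Measure X) [IsProbabilityMeasure μ₁] [IsProbabilityMeasure μ₂]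
    (h₁ : transportCost c (μ₁ ⊗ₘ K) < ⊤) (h₂ : transportCost c (μ₂ ⊗ₘ K) < ⊤) :
    IsCCM c (mSupport (μ₁ ⊗ₘ K) ∪ mSupport (μ₂ ⊗ₘ K)) := by
  set μ : Measure X := (2 : ℝ≥0∞)⁻¹ • (μ₁ + μ₂)
  have hμ : IsProbabilityMeasure μ :=
    ⟨by simp [μ, ← two_mul, ENNReal.mul_inv_cancel two_ne_zero ENNReal.ofNat_ne_top]⟩
  have hμK : μ ⊗ₘ K = (2 : ℝ≥0∞)⁻¹ • (μ₁ ⊗ₘ K + μ₂ ⊗ₘ K) := by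
    rw [Measure.compProd_smul_left, Measure.compProd_add_left]
  have hfin : transportCost c (μ ⊗ₘ K) < ⊤ := by
    rw [hμK, transportCost_smul, transportCost_add]
    exact ENNReal.mul_lt_top (by simp) (ENNReal.add_lt_top.2 ⟨h₁, h₂⟩)
  have hμ₁ : μ₁ ≪ μ := (Measure.AbsolutelyContinuous.rfl.add_right μ₂).trans
    (Measure.absolutelyContinuous_smul (by simp))
  have hμ₂ : μ₂ ≪ μ := (Measure.AbsolutelyContinuous.rfl.add_right' μ₁).trans
    (Measure.absolutelyContinuous_smul (by simp))
  exact ((hK μ hμ hfin).isCCM_mSupport hc_cont hc_nonneg hfin.ne).mono <| union_subset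
    (hμ₁.compProd_left K).mSupport_subset (hμ₂.compProd_left K).mSupport_subset

/-- If `K` is an optimal transport kernel and `γ₁ = μ₁ ⊙ K`,
`γ₂ = μ₂ ⊙ K` have finite transport cost, then `γ₁` and `γ₂` are `c`-CM compatible:
`supp(γ₁) ∪ supp(γ₂)` is `c`-cyclically monotone. -/
theorem stmt5 {X Y : Type*}
    [MeasurableSpace X] [TopologicalSpace X] [PolishSpace X] [BorelSpace X]
    [MeasurableSpace Y] [TopologicalSpace Y] [PolishSpace Y] [BorelSpace Y]
    (c : X × Y → ℝ) (hc_cont : Continuous c) (hc_nonneg : ∀ p, 0 ≤ c p)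
    (K : Kernel X Y) [IsMarkovKernel K] (hK : IsOptimalTransportKernel c K)
    (μ₁ μ₂ : Measure X) [IsProbabilityMeasure μ₁] [IsProbabilityMeasure μ₂]
    (h₁ : transportCost c (μ₁ ⊗ₘ K) < ⊤) (h₂ : transportCost c (μ₂ ⊗ₘ K) < ⊤) :
    IsCCM c (mSupport (μ₁ ⊗ₘ K) ∪ mSupport (μ₂ ⊗ₘ K)) :=
  stmt5_general c hc_cont hc_nonneg K hK μ₁ μ₂ h₁ h₂
end
end

section
/- Let a and b be finite signed measures on ℝ with the same finite-length signature (z₁,…,z_n), let α := ‖a‖ and β := ‖b‖ be their total variation measures, and assume ∫ c_X dα < ∞ and ∫ c_Y dβ < ∞ for a cost c(x,y) = h(y − x) with h : ℝ → [0,∞) convex and c(x,y) ≤ c_X(x) + c_Y(y). Let γ be the monotone (optimal) coupling between α and β. Then the kernel associated to γ sends a to b: writing f₊ := da⁺/dα and f₋ := da⁻/dα, one has (proj_Y)_#(f₊(x)·γ) = b⁺ and (proj_Y)_#(f₋(x)·γ) = b⁻, hence (proj_Y)_#((f₊(x) − f₋(x))·γ) = b. -/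
open MeasureTheory Set
open scoped ENNReal

noncomputable section

/-- `γ` is the monotone coupling of the (finite, equal-mass) measures `μ` and `ν` on
`ℝ`: `γ((−∞,c] × (−∞,d]) = min(F_μ(c), F_ν(d))` for all `c, d`. -/
def IsMonotoneCoupling (γ : Measure (ℝ × ℝ)) (μ ν : Measure ℝ) : Prop :=
  IsCoupling γ μ ν ∧ ∀ c d : ℝ, γ (Iic c ×ˢ Iic d) = min (μ (Iic c)) (ν (Iic d))

/-- For points `p 1 < … < p (n-1)` (with the conventions `p₀ = −∞`, `p_n = +∞`),
`sigInterval n p i` is the interval `(p_{i-1}, p_i]`, for `1 ≤ i ≤ n`. -/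
def sigInterval (n : ℕ) (p : ℕ → ℝ) (i : ℕ) : Set ℝ :=
  (if i = 1 then Set.univ else Set.Ioi (p (i - 1))) ∩
    (if i = n then Set.univ else Set.Iic (p i))

/-- The finite signed measure `a` has finite-length signature `(z 1, …, z n)` with
signature points `p 1 < … < p (n-1)` (conventions `p₀ = −∞`, `p_n = +∞`, so the
signature intervals are `(p_{i-1}, p_i]`): on each signature interval `a` restricts to
either `a⁺` or `−a⁻` (i.e. the other Jordan part vanishes there), consecutive
restrictions have opposite (nonzero) signs, and `z i = a((p_{i-1}, p_i])`. -/
def HasSignature (a : SignedMeasure ℝ) (n : ℕ) (p : ℕ → ℝ) (z : ℕ → ℝ) : Prop :=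
  1 ≤ n ∧
  (∀ i, 1 ≤ i → i + 1 ≤ n - 1 → p i < p (i + 1)) ∧
  (∀ i, 1 ≤ i → i ≤ n → z i = a (sigInterval n p i)) ∧
  (∀ i, 1 ≤ i → i ≤ n → z i ≠ 0) ∧
  (∃ s : ℕ → Bool,
    (∀ i, 1 ≤ i → i + 1 ≤ n → s (i + 1) = !(s i)) ∧
    (∀ i, 1 ≤ i → i ≤ n →
      if s i then a.toJordanDecomposition.negPart (sigInterval n p i) = 0
      else a.toJordanDecomposition.posPart (sigInterval n p i) = 0))

/-! Both `‖a‖` and `‖b‖` give mass `|z 1| + ⋯ + |z i|` to their first `i` signature intervals,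
so a coupling whose joint distribution function is `min (F_α, F_β)` moves no mass from
`(-∞, p i]` to `(q i, ∞)` or from `(p i, ∞)` to `(-∞, q i]`; hence it maps the `i`-th signature
interval of `a` onto that of `b`. On the union `S_a` of the positive signature intervals of `a`
the density `da⁺/d‖a‖` is `1_{S_a}`, so `f₊(x)·γ = γ|_{S_a × ℝ} = γ|_{ℝ × S_b}`, whose second
marginal is `‖b‖|_{S_b} = b⁺`. The statement for `a⁻` is the one for `a⁺` applied to `-a, -b`. -/

theorem measure_map_swap_prod {X Y : Type*} [MeasurableSpace X] [MeasurableSpace Y]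
    (γ : Measure (X × Y)) {A : Set X} {B : Set Y} (hA : MeasurableSet A) (hB : MeasurableSet B) :
    γ.map Prod.swap (B ×ˢ A) = γ (A ×ˢ B) := by
  rw [Measure.map_apply measurable_swap (hB.prod hA), preimage_swap_prod]

namespace IsCoupling

variable {X Y : Type*} [MeasurableSpace X] [MeasurableSpace Y]
  {γ : Measure (X × Y)} {μ : Measure X} {ν : Measure Y}

theorem swap (hγ : IsCoupling γ μ ν) : IsCoupling (γ.map Prod.swap) ν μ := by
  constructor <;> rw [Measure.map_map (by fun_prop) measurable_swap]
  exacts [hγ.2, hγ.1]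

theorem measure_prod_compl_eq_zero (hγ : IsCoupling γ μ ν) [IsFiniteMeasure μ]
    {A : Set X} {B : Set Y} (hA : MeasurableSet A) (hB : MeasurableSet B)
    (h : γ (A ×ˢ B) = μ A) : γ (A ×ˢ Bᶜ) = 0 := by
  have hsplit : γ (A ×ˢ B) + γ (A ×ˢ Bᶜ) = μ A := by
    rw [← measure_union (disjoint_compl_right.set_prod_right A A) (hA.prod hB.compl),
      ← prod_union, union_compl_self, ← hγ.1, Measure.map_apply measurable_fst hA, prod_univ]
  rw [h] at hsplit
  exact (ENNReal.add_right_inj (measure_ne_top μ A)).1 (hsplit.trans (add_zero _).symm)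

theorem withDensity_comp_fst_eq_restrict (hγ : IsCoupling γ μ ν) {f : X → ℝ≥0∞} {S : Set X}
    (hS : MeasurableSet S) (hf : f =ᵐ[μ] S.indicator 1) :
    γ.withDensity (fun pt => f pt.1) = γ.restrict (S ×ˢ univ) := by
  have hf' : (fun pt : X × Y => f pt.1) =ᵐ[γ] (S ×ˢ univ).indicator 1 := by
    filter_upwards [ae_of_ae_map measurable_fst.aemeasurable (hγ.1 ▸ hf)] with pt hpt
    by_cases hx : pt.1 ∈ S <;> simp [hpt, hx]
  rw [withDensity_congr_ae hf', withDensity_indicator_one (hS.prod .univ)]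

theorem map_snd_restrict_prod_univ (hγ : IsCoupling γ μ ν) {S : Set X} {T : Set Y}
    (hT : MeasurableSet T) (h₁ : γ (S ×ˢ Tᶜ) = 0) (h₂ : γ (Sᶜ ×ˢ T) = 0) :
    (γ.restrict (S ×ˢ univ)).map Prod.snd = ν.restrict T := by
  have hST : S ×ˢ univ =ᵐ[γ] (univ ×ˢ T : Set (X × Y)) := by
    refine ae_eq_set.2 ⟨measure_mono_null ?_ h₁, measure_mono_null ?_ h₂⟩
    · rintro ⟨x, y⟩ ⟨⟨hx, -⟩, hy⟩
      exact ⟨hx, fun hy' => hy ⟨trivial, hy'⟩⟩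
    · rintro ⟨x, y⟩ ⟨⟨-, hy⟩, hx⟩
      exact ⟨fun hx' => hx ⟨hx', trivial⟩, hy⟩
  rw [Measure.restrict_congr_set hST, univ_prod, ← Measure.restrict_map measurable_snd hT, hγ.2]

end IsCoupling

namespace MeasureTheory.SignedMeasure

variable {α : Type*} [MeasurableSpace α] {s : SignedMeasure α} {S : Set α}

theorem totalVariation_restrict_eq_posPart (hneg : s.toJordanDecomposition.negPart S = 0)
    (hpos : s.toJordanDecomposition.posPart Sᶜ = 0) :
    s.totalVariation.restrict S = s.toJordanDecomposition.posPart := by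
  rw [totalVariation, Measure.restrict_add, Measure.restrict_eq_zero.2 hneg, add_zero,
    Measure.restrict_eq_self_of_ae_mem (measure_eq_zero_iff_ae_notMem.1 hpos |>.mono ?_)]
  exact fun x hx => not_not.1 hx

theorem rnDeriv_posPart_ae_eq_indicator (hS : MeasurableSet S)
    (hneg : s.toJordanDecomposition.negPart S = 0) (hpos : s.toJordanDecomposition.posPart Sᶜ = 0) :
    s.toJordanDecomposition.posPart.rnDeriv s.totalVariation
      =ᵐ[s.totalVariation] S.indicator 1 := by
  rw [← totalVariation_restrict_eq_posPart hneg hpos, ← withDensity_indicator_one hS]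
  exact Measure.rnDeriv_withDensity _ (measurable_one.indicator hS)

end MeasureTheory.SignedMeasure

/-- `(-∞, p i]`, with the conventions `p 0 = -∞` and `p n = +∞` of `sigInterval`. -/
def sigPrefix (n : ℕ) (p : ℕ → ℝ) (i : ℕ) : Set ℝ :=
  if i = 0 then ∅ else if i = n then univ else Iic (p i)

section SignatureIntervals

variable {n : ℕ} {p : ℕ → ℝ} {i : ℕ}

theorem measurableSet_sigPrefix (n : ℕ) (p : ℕ → ℝ) (i : ℕ) :
    MeasurableSet (sigPrefix n p i) := by
  unfold sigPrefix
  split_ifs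
  exacts [.empty, .univ, measurableSet_Iic]

theorem measurableSet_sigInterval (n : ℕ) (p : ℕ → ℝ) (i : ℕ) :
    MeasurableSet (sigInterval n p i) := by
  unfold sigInterval
  split_ifs <;> simp [measurableSet_Ioi, measurableSet_Iic, MeasurableSet.inter]

theorem sigInterval_eq_diff (h1 : 1 ≤ i) (h2 : i ≤ n) :
    sigInterval n p i = sigPrefix n p i \ sigPrefix n p (i - 1) := by
  unfold sigInterval sigPrefix
  split_ifs <;> first | omega | ext x; simp [and_comm]

theorem sigPrefix_subset_succ (hp : ∀ i, 1 ≤ i → i + 1 ≤ n - 1 → p i < p (i + 1))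
    (hi : i < n) : sigPrefix n p i ⊆ sigPrefix n p (i + 1) := by
  unfold sigPrefix
  split_ifs <;> first | omega | contradiction | simp
  exact (hp i (by omega) (by omega)).le

theorem iUnion_sigInterval (hn : 1 ≤ n) : ⋃ i ∈ Finset.Icc 1 n, sigInterval n p i = univ := by
  classical
  refine eq_univ_of_forall fun x => ?_
  have hex : ∃ i, x ∈ sigPrefix n p i := ⟨n, by simp [sigPrefix, show n ≠ 0 by omega]⟩
  have hpos : Nat.find hex ≠ 0 := fun h => by
    have hx := Nat.find_spec hex
    rw [h] at hx
    simp [sigPrefix] at hx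
  have hle : Nat.find hex ≤ n := Nat.find_min' hex (by simp [sigPrefix, show n ≠ 0 by omega])
  refine mem_biUnion (Finset.mem_Icc.2 ⟨by omega, hle⟩) ?_
  rw [sigInterval_eq_diff (by omega) hle]
  exact ⟨Nat.find_spec hex, Nat.find_min hex (by omega)⟩

end SignatureIntervals

def sigPosSet (n : ℕ) (p z : ℕ → ℝ) : Set ℝ :=
  ⋃ i ∈ (Finset.Icc 1 n).filter (fun i => 0 < z i), sigInterval n p i

theorem measurableSet_sigPosSet (n : ℕ) (p z : ℕ → ℝ) : MeasurableSet (sigPosSet n p z) :=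
  .biUnion (Finset.countable_toSet _) fun i _ => measurableSet_sigInterval n p i

namespace HasSignature

open SignedMeasure

variable {a : SignedMeasure ℝ} {n : ℕ} {p z : ℕ → ℝ} {i : ℕ}

theorem sigInterval_cases (ha : HasSignature a n p z) (h1 : 1 ≤ i) (h2 : i ≤ n) :
    (0 < z i ∧ a.toJordanDecomposition.negPart (sigInterval n p i) = 0 ∧
      a.toJordanDecomposition.posPart (sigInterval n p i) = ENNReal.ofReal (z i)) ∨
    (z i < 0 ∧ a.toJordanDecomposition.posPart (sigInterval n p i) = 0 ∧
      a.toJordanDecomposition.negPart (sigInterval n p i) = ENNReal.ofReal (-z i)) := by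
  obtain ⟨-, -, hz, hz0, s, -, hs⟩ := ha
  have hval := (hz i h1 h2).trans
    (a.apply_eq_posPart_real_sub_negPart_real (measurableSet_sigInterval n p i))
  have hzi := hz0 i h1 h2
  specialize hs i h1 h2
  split_ifs at hs
  · have hzpos : z i = a.toJordanDecomposition.posPart.real (sigInterval n p i) := by
      simp [hval, measureReal_def, hs]
    refine .inl ⟨lt_of_le_of_ne (hzpos ▸ measureReal_nonneg) hzi.symm, hs, ?_⟩
    rw [hzpos, ofReal_measureReal]
  · have hzneg : -z i = a.toJordanDecomposition.negPart.real (sigInterval n p i) := by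
      simp [hval, measureReal_def, hs]
    refine .inr ⟨?_, hs, ?_⟩
    · exact neg_pos.1 (lt_of_le_of_ne (hzneg ▸ measureReal_nonneg) (neg_ne_zero.2 hzi).symm)
    · rw [hzneg, ofReal_measureReal]

theorem totalVariation_sigInterval (ha : HasSignature a n p z) (h1 : 1 ≤ i) (h2 : i ≤ n) :
    a.totalVariation (sigInterval n p i) = ENNReal.ofReal |z i| := by
  rcases ha.sigInterval_cases h1 h2 with ⟨hz, hneg, hpos⟩ | ⟨hz, hpos, hneg⟩
  · rw [totalVariation, Measure.add_apply, hneg, hpos, add_zero, abs_of_pos hz]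
  · rw [totalVariation, Measure.add_apply, hneg, hpos, zero_add, abs_of_neg hz]

theorem totalVariation_sigPrefix (ha : HasSignature a n p z) (hi : i ≤ n) :
    a.totalVariation (sigPrefix n p i) = ∑ j ∈ Finset.Icc 1 i, ENNReal.ofReal |z j| := by
  induction i with
  | zero => simp [sigPrefix]
  | succ i ih =>
    have hsplit : sigPrefix n p (i + 1) = sigPrefix n p i ∪ sigInterval n p (i + 1) := by
      rw [sigInterval_eq_diff (by omega) hi, Nat.add_sub_cancel,
        union_sdiff_cancel (sigPrefix_subset_succ ha.2.1 hi)]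
    rw [hsplit, measure_union _ (measurableSet_sigInterval n p (i + 1)), ih (by omega),
      ha.totalVariation_sigInterval (by omega) hi, Finset.sum_Icc_succ_top (by omega)]
    rw [sigInterval_eq_diff (by omega) hi, Nat.add_sub_cancel]
    exact disjoint_sdiff_right

theorem negPart_sigPosSet (ha : HasSignature a n p z) :
    a.toJordanDecomposition.negPart (sigPosSet n p z) = 0 := by
  refine (measure_biUnion_null_iff (Finset.countable_toSet _)).2 fun i hi => ?_
  obtain ⟨hi, hz⟩ := Finset.mem_filter.1 hi
  obtain ⟨h1, h2⟩ := Finset.mem_Icc.1 hi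
  rcases ha.sigInterval_cases h1 h2 with ⟨-, hneg, -⟩ | ⟨hz', -⟩
  exacts [hneg, absurd hz hz'.not_gt]

theorem posPart_compl_sigPosSet (ha : HasSignature a n p z) :
    a.toJordanDecomposition.posPart (sigPosSet n p z)ᶜ = 0 := by
  have hsub : (sigPosSet n p z)ᶜ ⊆
      ⋃ i ∈ (Finset.Icc 1 n).filter (fun i => ¬ 0 < z i), sigInterval n p i := by
    intro x hx
    obtain ⟨i, hi, hxi⟩ := mem_iUnion₂.1 ((iUnion_sigInterval (p := p) ha.1).symm ▸ mem_univ x)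
    exact mem_biUnion (Finset.mem_filter.2 ⟨hi, fun hz => hx
      (mem_biUnion (Finset.mem_filter.2 ⟨hi, hz⟩) hxi)⟩) hxi
  refine measure_mono_null hsub
    ((measure_biUnion_null_iff (Finset.countable_toSet _)).2 fun i hi => ?_)
  obtain ⟨hi, hz⟩ := Finset.mem_filter.1 hi
  obtain ⟨h1, h2⟩ := Finset.mem_Icc.1 hi
  rcases ha.sigInterval_cases h1 h2 with ⟨hz', -⟩ | ⟨-, hpos, -⟩
  exacts [absurd hz' hz, hpos]

theorem totalVariation_restrict_sigPosSet (ha : HasSignature a n p z) :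
    a.totalVariation.restrict (sigPosSet n p z) = a.toJordanDecomposition.posPart :=
  totalVariation_restrict_eq_posPart ha.negPart_sigPosSet ha.posPart_compl_sigPosSet

theorem rnDeriv_posPart_ae_eq_indicator (ha : HasSignature a n p z) :
    a.toJordanDecomposition.posPart.rnDeriv a.totalVariation
      =ᵐ[a.totalVariation] (sigPosSet n p z).indicator 1 :=
  SignedMeasure.rnDeriv_posPart_ae_eq_indicator (measurableSet_sigPosSet n p z)
    ha.negPart_sigPosSet ha.posPart_compl_sigPosSet

theorem neg (ha : HasSignature a n p z) : HasSignature (-a) n p (-z) := by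
  obtain ⟨hn, hp, hz, hz0, s, hsalt, hs⟩ := ha
  refine ⟨hn, hp, fun i h1 h2 => ?_, fun i h1 h2 => ?_, fun i => !s i,
    fun i h1 h2 => by simp [hsalt i h1 h2], fun i h1 h2 => ?_⟩
  · simp [hz i h1 h2]
  · simpa using hz0 i h1 h2
  · specialize hs i h1 h2
    cases s i <;> simpa [toJordanDecomposition_neg] using hs

end HasSignature

namespace IsMonotoneCoupling

variable {γ : Measure (ℝ × ℝ)} {a b : SignedMeasure ℝ} {n : ℕ} {p q z : ℕ → ℝ} {i : ℕ}

theorem swap {μ ν : Measure ℝ} (hγ : IsMonotoneCoupling γ μ ν) :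
    IsMonotoneCoupling (γ.map Prod.swap) ν μ :=
  ⟨hγ.1.swap, fun c d => by
    rw [measure_map_swap_prod γ measurableSet_Iic measurableSet_Iic, hγ.2, min_comm]⟩

theorem measure_sigPrefix_prod_compl
    (hγ : IsMonotoneCoupling γ a.totalVariation b.totalVariation)
    (ha : HasSignature a n p z) (hb : HasSignature b n q z) (hi : i ≤ n) :
    γ (sigPrefix n p i ×ˢ (sigPrefix n q i)ᶜ) = 0 := by
  have hmass := (ha.totalVariation_sigPrefix hi).trans (hb.totalVariation_sigPrefix hi).symm
  unfold sigPrefix at hmass ⊢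
  split_ifs at hmass ⊢
  · simp
  · simp
  · refine hγ.1.measure_prod_compl_eq_zero measurableSet_Iic measurableSet_Iic ?_
    rw [hγ.2, hmass, min_self]

theorem measure_compl_sigPrefix_prod
    (hγ : IsMonotoneCoupling γ a.totalVariation b.totalVariation)
    (ha : HasSignature a n p z) (hb : HasSignature b n q z) (hi : i ≤ n) :
    γ ((sigPrefix n p i)ᶜ ×ˢ sigPrefix n q i) = 0 := by
  rw [← measure_map_swap_prod γ (measurableSet_sigPrefix n p i).compl
    (measurableSet_sigPrefix n q i)]
  exact hγ.swap.measure_sigPrefix_prod_compl hb ha hi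

theorem measure_sigInterval_prod_compl
    (hγ : IsMonotoneCoupling γ a.totalVariation b.totalVariation)
    (ha : HasSignature a n p z) (hb : HasSignature b n q z) (h1 : 1 ≤ i) (h2 : i ≤ n) :
    γ (sigInterval n p i ×ˢ (sigInterval n q i)ᶜ) = 0 := by
  refine measure_mono_null ?_ (measure_union_null (hγ.measure_sigPrefix_prod_compl ha hb h2)
    (hγ.measure_compl_sigPrefix_prod ha hb (i := i - 1) (by omega)))
  rintro ⟨x, y⟩ ⟨hx, hy⟩
  rw [sigInterval_eq_diff h1 h2] at hx
  rw [mem_compl_iff, sigInterval_eq_diff h1 h2] at hy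
  by_cases hyi : y ∈ sigPrefix n q i
  · exact .inr ⟨hx.2, not_not.1 fun hy' => hy ⟨hyi, hy'⟩⟩
  · exact .inl ⟨hx.1, hyi⟩

theorem measure_sigPosSet_prod_compl
    (hγ : IsMonotoneCoupling γ a.totalVariation b.totalVariation)
    (ha : HasSignature a n p z) (hb : HasSignature b n q z) :
    γ (sigPosSet n p z ×ˢ (sigPosSet n q z)ᶜ) = 0 := by
  rw [sigPosSet, iUnion₂_prod_const]
  refine (measure_biUnion_null_iff (Finset.countable_toSet _)).2 fun i hi => ?_
  obtain ⟨h1, h2⟩ := Finset.mem_Icc.1 (Finset.mem_filter.1 hi).1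
  refine measure_mono_null (prod_mono_right (compl_subset_compl.2 ?_))
    (hγ.measure_sigInterval_prod_compl ha hb h1 h2)
  exact subset_biUnion_of_mem (u := fun i => sigInterval n q i) hi

theorem measure_compl_sigPosSet_prod
    (hγ : IsMonotoneCoupling γ a.totalVariation b.totalVariation)
    (ha : HasSignature a n p z) (hb : HasSignature b n q z) :
    γ ((sigPosSet n p z)ᶜ ×ˢ sigPosSet n q z) = 0 := by
  rw [← measure_map_swap_prod γ (measurableSet_sigPosSet n p z).compl
    (measurableSet_sigPosSet n q z)]
  exact hγ.swap.measure_sigPosSet_prod_compl hb ha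

theorem map_snd_withDensity_rnDeriv_posPart
    (hγ : IsMonotoneCoupling γ a.totalVariation b.totalVariation)
    (ha : HasSignature a n p z) (hb : HasSignature b n q z) :
    (γ.withDensity fun pt => a.toJordanDecomposition.posPart.rnDeriv a.totalVariation pt.1).map
      Prod.snd = b.toJordanDecomposition.posPart := by
  rw [hγ.1.withDensity_comp_fst_eq_restrict (measurableSet_sigPosSet n p z)
      ha.rnDeriv_posPart_ae_eq_indicator,
    hγ.1.map_snd_restrict_prod_univ (measurableSet_sigPosSet n q z)
      (hγ.measure_sigPosSet_prod_compl ha hb) (hγ.measure_compl_sigPosSet_prod ha hb),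
    hb.totalVariation_restrict_sigPosSet]

end IsMonotoneCoupling

theorem stmt12_general (a b : SignedMeasure ℝ)
    (n : ℕ) (p q : ℕ → ℝ) (z : ℕ → ℝ)
    (ha : HasSignature a n p z) (hb : HasSignature b n q z)
    (γ : Measure (ℝ × ℝ))
    (hγ : IsMonotoneCoupling γ a.totalVariation b.totalVariation) :
    (γ.withDensity (fun pt =>
        a.toJordanDecomposition.posPart.rnDeriv a.totalVariation pt.1)).map Prod.snd
      = b.toJordanDecomposition.posPart ∧
    (γ.withDensity (fun pt =>
        a.toJordanDecomposition.negPart.rnDeriv a.totalVariation pt.1)).map Prod.snd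
      = b.toJordanDecomposition.negPart := by
  refine ⟨hγ.map_snd_withDensity_rnDeriv_posPart ha hb, ?_⟩
  have hγneg : IsMonotoneCoupling γ (-a).totalVariation (-b).totalVariation := by
    rwa [SignedMeasure.totalVariation_neg, SignedMeasure.totalVariation_neg]
  simpa [SignedMeasure.totalVariation_neg, SignedMeasure.toJordanDecomposition_neg] using
    hγneg.map_snd_withDensity_rnDeriv_posPart ha.neg hb.neg

/-- Let `a`, `b` be finite signed measures on `ℝ` with the same
finite-length signature, `α := ‖a‖`, `β := ‖b‖` with finite moments for the cost
`c(x,y) = h(y − x)`, `h` convex and non-negative, `c(x,y) ≤ c_X(x) + c_Y(y)`.  Let `γ`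
be the monotone (optimal) coupling between `α` and `β`.  Then the kernel associated to
`γ` sends `a` to `b`: with `f₊ := da⁺/dα` and `f₋ := da⁻/dα`,
`(proj_Y)_#(f₊(x)·γ) = b⁺` and `(proj_Y)_#(f₋(x)·γ) = b⁻`, hence
`(proj_Y)_#((f₊(x) − f₋(x))·γ) = b`. -/
theorem stmt12 (a b : SignedMeasure ℝ)
    (n : ℕ) (p q : ℕ → ℝ) (z : ℕ → ℝ)
    (ha : HasSignature a n p z) (hb : HasSignature b n q z)
    (h : ℝ → ℝ) (hconv : ConvexOn ℝ Set.univ h) (hnonneg : ∀ t, 0 ≤ h t)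
    (c : ℝ × ℝ → ℝ) (hc : ∀ pt : ℝ × ℝ, c pt = h (pt.2 - pt.1))
    (cX cY : ℝ → ℝ) (hcX : Measurable cX) (hcY : Measurable cY)
    (hc_bound : ∀ pt : ℝ × ℝ, c pt ≤ cX pt.1 + cY pt.2)
    (hamom : ∫⁻ x, ENNReal.ofReal (cX x) ∂a.totalVariation < ⊤)
    (hbmom : ∫⁻ y, ENNReal.ofReal (cY y) ∂b.totalVariation < ⊤)
    (γ : Measure (ℝ × ℝ))
    (hγ : IsMonotoneCoupling γ a.totalVariation b.totalVariation) :
    (γ.withDensity (fun pt =>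
        a.toJordanDecomposition.posPart.rnDeriv a.totalVariation pt.1)).map Prod.snd
      = b.toJordanDecomposition.posPart ∧
    (γ.withDensity (fun pt =>
        a.toJordanDecomposition.negPart.rnDeriv a.totalVariation pt.1)).map Prod.snd
      = b.toJordanDecomposition.negPart :=
  stmt12_general a b n p q z ha hb γ hγ
end
end
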